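/- Let Φ be an m×n real matrix, b ∈ ℝᵐ, and let x* ∈ ℝⁿ be a solution of (P₀): Φx* = b and ‖x*‖₀ ≤ ‖x‖₀ for every x with Φx = b. Then there exists ŵ ∈ ℝⁿ with ŵᵢ ≥ 0 for all i such that: (a) every minimizer of the weighted ℓ₁ problem min{ Σᵢ ŵᵢ|xᵢ| : Φx = b } is a solution of (P₀), and (b) ŵ is a dual optimal point, i.e., d(ŵ) = 0 where d(w) = inf{ Σᵢ wᵢ|xᵢ| : Φx = b } − Σᵢ wᵢ|x*ᵢ| and 0 is the dual optimal value. -/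

import Mathlib

/-- The ℓ₀ pseudo-norm: the number of nonzero coordinates of `x`. -/
noncomputable def normZero {n : ℕ} (x : Fin n → ℝ) : ℕ :=
  (Finset.univ.filter fun i => x i ≠ 0).card

/-- The noiseless dual function `d(w) = inf { Σᵢ wᵢ|xᵢ| : Φx = b } − Σᵢ wᵢ|x*ᵢ|`. -/
noncomputable def dualFn {m n : ℕ} (Φ : Matrix (Fin m) (Fin n) ℝ) (b : Fin m → ℝ)
    (xs : Fin n → ℝ) (w : Fin n → ℝ) : ℝ :=
  sInf {y : ℝ | ∃ x : Fin n → ℝ, Φ.mulVec x = b ∧ y = ∑ i, w i * |x i|}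
    - ∑ i, w i * |xs i|

/-!
Put weight `1` on every coordinate where `x*` vanishes and `0` on its support. Then `x*` has
weighted ℓ₁ cost `0`, the least possible for nonnegative weights, so `d(ŵ) = 0`, and every weighted
ℓ₁ minimizer also has cost `0`, i.e. is supported inside the support of `x*`; hence it is at most
as sparse as `x*`, which is optimal for (P₀).
-/

open Finset

section OffSupportWeights

variable {ι : Type*}

noncomputable def offSupportWeights (x : ι → ℝ) : ι → ℝ :=
  fun i => if x i = 0 then 1 else 0

theorem offSupportWeights_nonneg (x : ι → ℝ) (i : ι) : 0 ≤ offSupportWeights x i := by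
  unfold offSupportWeights
  split <;> norm_num

variable [Fintype ι]

theorem sum_mul_abs_nonneg {w : ι → ℝ} (hw : ∀ i, 0 ≤ w i) (y : ι → ℝ) :
    0 ≤ ∑ i, w i * |y i| :=
  sum_nonneg fun i _ => mul_nonneg (hw i) (abs_nonneg _)

theorem sum_offSupportWeights_mul_abs_self (x : ι → ℝ) :
    ∑ i, offSupportWeights x i * |x i| = 0 :=
  sum_eq_zero fun i _ => by by_cases h : x i = 0 <;> simp [offSupportWeights, h]

theorem eq_zero_of_sum_offSupportWeights_mul_abs_eq_zero {x y : ι → ℝ}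
    (h : ∑ i, offSupportWeights x i * |y i| = 0) {i : ι} (hi : x i = 0) : y i = 0 := by
  have hterm := (sum_eq_zero_iff_of_nonneg fun j _ =>
    mul_nonneg (offSupportWeights_nonneg x j) (abs_nonneg (y j))).1 h i (mem_univ i)
  simpa [offSupportWeights, hi] using hterm

end OffSupportWeights

theorem normZero_le_of_support_subset {n : ℕ} {x y : Fin n → ℝ}
    (h : ∀ i, x i ≠ 0 → y i ≠ 0) : normZero x ≤ normZero y :=
  card_le_card fun i hi => by
    simp only [mem_filter, mem_univ, true_and] at hi ⊢
    exact h i hi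

theorem dualFn_eq_zero_of_sum_mul_abs_eq_zero {m n : ℕ} {Φ : Matrix (Fin m) (Fin n) ℝ}
    {b : Fin m → ℝ} {xs w : Fin n → ℝ} (hxs : Φ.mulVec xs = b) (hw : ∀ i, 0 ≤ w i)
    (hzero : ∑ i, w i * |xs i| = 0) : dualFn Φ b xs w = 0 := by
  have hleast : IsLeast {y : ℝ | ∃ x : Fin n → ℝ, Φ.mulVec x = b ∧ y = ∑ i, w i * |x i|} 0 :=
    ⟨⟨xs, hxs, hzero.symm⟩, by rintro _ ⟨x, -, rfl⟩; exact sum_mul_abs_nonneg hw x⟩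
  rw [dualFn, hleast.csInf_eq, hzero, sub_self]

/-- If `x*` solves (P₀), then there exist useful weights `ŵ ≥ 0`: every
minimizer of the associated weighted ℓ₁ problem solves (P₀), and `ŵ` is a
dual optimal point (`d(ŵ) = 0`, the dual optimal value). -/
theorem useful_dual_weights_exist {m n : ℕ} (Φ : Matrix (Fin m) (Fin n) ℝ)
    (b : Fin m → ℝ) (xs : Fin n → ℝ) (hxs : Φ.mulVec xs = b)
    (hxs0 : ∀ x : Fin n → ℝ, Φ.mulVec x = b → normZero xs ≤ normZero x) :
    ∃ wh : Fin n → ℝ, (∀ i, 0 ≤ wh i) ∧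
      (∀ xw : Fin n → ℝ, Φ.mulVec xw = b →
        (∀ x : Fin n → ℝ, Φ.mulVec x = b →
          ∑ i, wh i * |xw i| ≤ ∑ i, wh i * |x i|) →
        ∀ x : Fin n → ℝ, Φ.mulVec x = b → normZero xw ≤ normZero x) ∧
      dualFn Φ b xs wh = 0 := by
  have hself := sum_offSupportWeights_mul_abs_self xs
  refine ⟨offSupportWeights xs, offSupportWeights_nonneg xs, ?_,
    dualFn_eq_zero_of_sum_mul_abs_eq_zero hxs (offSupportWeights_nonneg xs) hself⟩
  intro xw _ hmin x hx
  have hzero : ∑ i, offSupportWeights xs i * |xw i| = 0 :=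
    le_antisymm (hself ▸ hmin xs hxs) (sum_mul_abs_nonneg (offSupportWeights_nonneg xs) xw)
  have hsupp : ∀ i, xw i ≠ 0 → xs i ≠ 0 := fun i hi hxsi =>
    hi (eq_zero_of_sum_offSupportWeights_mul_abs_eq_zero hzero hxsi)
  exact (normZero_le_of_support_subset hsupp).trans (hxs0 x hx)
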